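/- arXiv:1407.4962 — 4 statements merged into one kernel-verified Lean document; each statement's English description precedes it below -/
import Mathlib

section
/- Let u be a nonempty string of length n over an alphabet. If β(u) = α^j(u) for some integer j, then the dihedral orbit of u has exactly p(u) elements; if β(u) ≠ α^j(u) for all integers j, then the dihedral orbit of u has exactly 2·p(u) elements. -/
open scoped Classical

/-- Cyclic shift `α`: maps `u₁u₂⋯uₙ` to `uₙu₁⋯uₙ₋₁`. -/
def cyc {α : Type*} (u : List α) : List α := u.rotate (u.length - 1)

/-- `listPow v k` is the concatenation of `k` copies of `v`. -/
def listPow {α : Type*} (v : List α) (k : ℕ) : List α := (List.replicate k v).flatten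

/-- The period of `u`: the least `k > 0` with `cyc^[k] u = u`. -/
noncomputable def period {α : Type*} (u : List α) : ℕ := sInf {k | 0 < k ∧ cyc^[k] u = u}

/-- `u` is primitive if it is not the concatenation of `k ≥ 2` copies of a shorter string. -/
def IsPrimitive {α : Type*} (u : List α) : Prop :=
  ∀ (v : List α) (k : ℕ), 2 ≤ k → v.length < u.length → u ≠ listPow v k

/-- The dihedral orbit of `u`: `{α^j(u) : 0 ≤ j < n} ∪ {α^j(β(u)) : 0 ≤ j < n}`,
where `β` is reversal. -/
noncomputable def dihedralOrbit {α : Type*} [DecidableEq α] (u : List α) : Finset (List α) :=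
  ((Finset.range u.length).image fun j => cyc^[j] u) ∪
    ((Finset.range u.length).image fun j => cyc^[j] u.reverse)

/-- Lucas numbers: `L₀ = 2`, `L₁ = 1`, `Lₙ = Lₙ₋₁ + Lₙ₋₂`. -/
def lucas : ℕ → ℕ
  | 0 => 2
  | 1 => 1
  | n + 2 => lucas (n + 1) + lucas n

/-- All binary strings of length `n`, as a finset of boolean lists. -/
def allBool (n : ℕ) : Finset (List Bool) :=
  (Finset.univ : Finset (Fin n → Bool)).image fun f => List.ofFn f

/-- A Fibonacci string: a binary string with no two consecutive 1s. -/
def IsFibStr (l : List Bool) : Prop := l.Chain' fun a b => a = false ∨ b = false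

/-- The Fibonacci strings of length `n` (vertices of the Fibonacci cube `Γₙ`). -/
noncomputable def fibStrings (n : ℕ) : Finset (List Bool) := (allBool n).filter IsFibStr

/-- A Lucas string: a binary string with no two consecutive 1s which does not both
begin and end with 1. -/
def IsLucasStr (l : List Bool) : Prop :=
  IsFibStr l ∧ ¬(l.head? = some true ∧ l.getLast? = some true)

/-- The Lucas strings of length `n` (vertices of the Lucas cube `Λₙ`). -/
noncomputable def lucasStrings (n : ℕ) : Finset (List Bool) := (allBool n).filter IsLucasStr

/-- Two strings differ in exactly one position. -/
def DifferOne (u v : List Bool) : Prop :=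
  u.length = v.length ∧ (List.zipWith (fun a b => a != b) u v).count true = 1

/-- The edges of the Fibonacci cube `Γₙ`, as unordered pairs of vertices. -/
noncomputable def fibEdges (n : ℕ) : Finset (Finset (List Bool)) :=
  ((fibStrings n ×ˢ fibStrings n).filter fun p => DifferOne p.1 p.2).image fun p => {p.1, p.2}

/-- The edges of the Lucas cube `Λₙ`, as unordered pairs of vertices. -/
noncomputable def lucasEdges (n : ℕ) : Finset (Finset (List Bool)) :=
  ((lucasStrings n ×ˢ lucasStrings n).filter fun p => DifferOne p.1 p.2).image fun p => {p.1, p.2}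

/-- The orbit of a vertex under the reversal map `β`. -/
def revOrbit (u : List Bool) : Finset (List Bool) := {u, u.reverse}

/-- The orbit of an edge under the reversal map `β`, acting by `β({u,v}) = {β(u),β(v)}`. -/
def revEdgeOrbit (e : Finset (List Bool)) : Finset (Finset (List Bool)) :=
  {e, e.image List.reverse}

/-- The orbit of an edge under the dihedral action on strings of length `n`:
`{α^j(e) : 0 ≤ j < n} ∪ {α^j(β(e)) : 0 ≤ j < n}`. -/
noncomputable def dihedralEdgeOrbit (n : ℕ) (e : Finset (List Bool)) :
    Finset (Finset (List Bool)) :=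
  ((Finset.range n).image fun j => e.image fun u => cyc^[j] u) ∪
    ((Finset.range n).image fun j => e.image fun u => cyc^[j] u.reverse)

/-
Reversal conjugates the cyclic shift `α` to its inverse `α⁻¹ = rotate 1`, so `u` and `β(u)` have
the same period, and `α` permutes strings of length `n` with `αⁿ = id`. The dihedral orbit is
therefore the union of the two `α`-orbits of `u` and `β(u)`, each with `p(u)` elements; two orbits
of a permutation either coincide or are disjoint, and which case occurs is decided by whether
`β(u)` is some `α^j(u)`.
-/

namespace Function

variable {β : Type*} {f g : β → β} {x y z : β} {n : ℕ}

theorem LeftInverse.isPeriodicPt (h : LeftInverse g f) (hx : IsPeriodicPt f n x) :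
    IsPeriodicPt g n x :=
  calc g^[n] x = g^[n] (f^[n] x) := by rw [hx.eq]
    _ = x := h.iterate n x

variable [DecidableEq β]

theorem IsPeriodicPt.mem_image_range_iterate (hx : IsPeriodicPt f n x) (hn : 0 < n) :
    z ∈ (Finset.range n).image (f^[·] x) ↔ ∃ k, f^[k] x = z := by
  simp only [Finset.mem_image, Finset.mem_range]
  refine ⟨fun ⟨k, _, hk⟩ => ⟨k, hk⟩, fun ⟨k, hk⟩ => ⟨k % n, Nat.mod_lt k hn, ?_⟩⟩
  rw [hx.iterate_mod_apply, hk]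

theorem IsPeriodicPt.mem_image_range_iterate_iff_mem_periodicOrbit (hx : IsPeriodicPt f n x)
    (hn : 0 < n) : z ∈ (Finset.range n).image (f^[·] x) ↔ z ∈ periodicOrbit f x := by
  rw [hx.mem_image_range_iterate hn, mem_periodicOrbit_iff (mk_mem_periodicPts hn hx)]

theorem IsPeriodicPt.card_image_range_iterate (hx : IsPeriodicPt f n x) (hn : 0 < n) :
    ((Finset.range n).image (f^[·] x)).card = minimalPeriod f x := by
  have hmin : 0 < minimalPeriod f x := hx.minimalPeriod_pos hn
  have hrange : (Finset.range n).image (f^[·] x)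
      = (Finset.range (minimalPeriod f x)).image (f^[·] x) := by
    ext z
    rw [hx.mem_image_range_iterate hn,
      (isPeriodicPt_minimalPeriod f x).mem_image_range_iterate hmin]
  rw [hrange, Finset.card_image_of_injOn, Finset.card_range]
  simpa only [Finset.coe_range] using iterate_injOn_Iio_minimalPeriod

theorem IsPeriodicPt.image_range_iterate_iterate (hx : IsPeriodicPt f n x) (hn : 0 < n) (j : ℕ) :
    (Finset.range n).image (f^[·] (f^[j] x)) = (Finset.range n).image (f^[·] x) := by
  ext z
  rw [(hx.apply_iterate j).mem_image_range_iterate_iff_mem_periodicOrbit hn,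
    hx.mem_image_range_iterate_iff_mem_periodicOrbit hn,
    periodicOrbit_apply_iterate_eq (mk_mem_periodicPts hn hx)]

theorem IsPeriodicPt.disjoint_image_range_iterate (hx : IsPeriodicPt f n x)
    (hy : IsPeriodicPt f n y) (hn : 0 < n) (hxy : ∀ j, y ≠ f^[j] x) :
    Disjoint ((Finset.range n).image (f^[·] x)) ((Finset.range n).image (f^[·] y)) := by
  refine Finset.disjoint_left.2 fun z hzx hzy => ?_
  obtain ⟨k, rfl⟩ := (hx.mem_image_range_iterate hn).1 hzx
  obtain ⟨m, hm⟩ := (hy.mem_image_range_iterate hn).1 hzy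
  have horbit : (Finset.range n).image (f^[·] y) = (Finset.range n).image (f^[·] x) := by
    rw [← hy.image_range_iterate_iterate hn m, hm, hx.image_range_iterate_iterate hn k]
  have hy_mem : y ∈ (Finset.range n).image (f^[·] x) :=
    horbit ▸ (hy.mem_image_range_iterate hn).2 ⟨0, rfl⟩
  obtain ⟨j, hj⟩ := (hx.mem_image_range_iterate hn).1 hy_mem
  exact hxy j hj.symm

end Function

section Cyc

variable {α : Type*}

open Function

theorem List.iterate_rotate_one (l : List α) (k : ℕ) : (·.rotate 1)^[k] l = l.rotate k := by
  induction k with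
  | zero => simp
  | succ k ih => rw [iterate_succ_apply', ih, List.rotate_rotate]

theorem leftInverse_rotate_one_cyc : LeftInverse (·.rotate 1) (cyc : List α → List α) := by
  intro l
  rcases eq_or_ne l [] with rfl | hl
  · rfl
  · dsimp only
    rw [cyc, List.rotate_rotate, Nat.sub_add_cancel (List.length_pos_iff.2 hl),
      List.rotate_length]

theorem rightInverse_rotate_one_cyc : RightInverse (·.rotate 1) (cyc : List α → List α) := by
  intro l
  rcases eq_or_ne l [] with rfl | hl
  · rfl
  · rw [cyc, List.length_rotate, List.rotate_rotate,
      Nat.add_sub_cancel' (List.length_pos_iff.2 hl), List.rotate_length]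

theorem semiconj_reverse_rotate_one_cyc :
    Semiconj List.reverse (·.rotate 1) (cyc : List α → List α) := by
  rintro (_ | ⟨a, l⟩)
  · rfl
  · simp only [List.rotate_cons_succ, List.rotate_zero, List.reverse_cons, cyc,
      List.length_append, List.length_reverse, List.length_singleton, Nat.add_sub_cancel]
    rw [List.reverse_append, ← List.length_reverse (as := l), List.rotate_append_length_eq]
    rfl

theorem isPeriodicPt_cyc_iff {l : List α} {k : ℕ} : IsPeriodicPt cyc k l ↔ l.rotate k = l := by
  rw [← List.iterate_rotate_one]
  exact ⟨leftInverse_rotate_one_cyc.isPeriodicPt, rightInverse_rotate_one_cyc.isPeriodicPt⟩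

theorem isPeriodicPt_cyc_reverse_iff {l : List α} {k : ℕ} :
    IsPeriodicPt cyc k l.reverse ↔ l.rotate k = l := by
  rw [IsPeriodicPt, IsFixedPt, ← (semiconj_reverse_rotate_one_cyc.iterate_right k).eq,
    List.iterate_rotate_one, List.reverse_inj]

theorem isPeriodicPt_cyc_length (l : List α) : IsPeriodicPt cyc l.length l :=
  isPeriodicPt_cyc_iff.2 l.rotate_length

theorem minimalPeriod_cyc_reverse (l : List α) :
    minimalPeriod cyc l.reverse = minimalPeriod cyc l :=
  minimalPeriod_eq_minimalPeriod_iff.2 fun _ =>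
    isPeriodicPt_cyc_reverse_iff.trans isPeriodicPt_cyc_iff.symm

theorem period_eq_minimalPeriod_cyc (l : List α) : period l = minimalPeriod cyc l := by
  rw [minimalPeriod_eq_sInf_n_pos_IsPeriodicPt]
  rfl

end Cyc

theorem card_dihedralOrbit_eq_period_or_two_mul_general {α : Type*} [DecidableEq α]
    (u : List α) (hu : u ≠ []) :
    ((∃ j : ℕ, u.reverse = cyc^[j] u) → (dihedralOrbit u).card = period u) ∧
    ((∀ j : ℕ, u.reverse ≠ cyc^[j] u) → (dihedralOrbit u).card = 2 * period u) := by
  have hn : 0 < u.length := List.length_pos_iff.2 hu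
  have hper := isPeriodicPt_cyc_length u
  have hrev : Function.IsPeriodicPt cyc u.length u.reverse := by
    simpa only [List.length_reverse] using isPeriodicPt_cyc_length u.reverse
  have hcard := hper.card_image_range_iterate hn
  rw [dihedralOrbit, period_eq_minimalPeriod_cyc]
  constructor
  · rintro ⟨j, hj⟩
    rw [hj, hper.image_range_iterate_iterate hn, Finset.union_self, hcard]
  · intro hne
    rw [Finset.card_union_of_disjoint (hper.disjoint_image_range_iterate hrev hn hne), hcard,
      hrev.card_image_range_iterate hn, minimalPeriod_cyc_reverse, two_mul]

/-- If `β(u) = α^j(u)` for some `j`, the dihedral orbit of `u` has `p(u)` elements;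
otherwise it has `2·p(u)` elements. -/
theorem card_dihedralOrbit_eq_period_or_two_mul {α : Type*} [DecidableEq α]
    (n : ℕ) (u : List α) (hu : u ≠ []) (hlen : u.length = n) :
    ((∃ j : ℕ, u.reverse = cyc^[j] u) → (dihedralOrbit u).card = period u) ∧
    ((∀ j : ℕ, u.reverse ≠ cyc^[j] u) → (dihedralOrbit u).card = 2 * period u) :=
  card_dihedralOrbit_eq_period_or_two_mul_general u hu
end

section
/- For every integer k ≥ 1: the number of palindromic Fibonacci strings of length 2k equals F_{k+1}, and the number of palindromic Fibonacci strings of length 2k+1 equals F_{k+3}; among the palindromic Fibonacci strings of length 2k, exactly F_k begin with 0 and exactly F_{k−1} begin with 1; among the palindromic Fibonacci strings of length 2k+1, exactly F_{k+2} begin with 0 and exactly F_{k+1} begin with 1. -/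
/-!
A palindromic Fibonacci string of length `n + 2` beginning with 0 is `0w0` for an arbitrary
palindromic Fibonacci string `w` of length `n`, and one beginning with 1 is `1w1` for such a `w`
beginning with 0. Hence the number `Z n` of palindromic Fibonacci strings of length `n` beginning
with 0 satisfies `Z (n + 4) = Z (n + 2) + Z n`, so `Z (2k) = F_k` and `Z (2k+1) = F_{k+2}`, and
every count in the theorem is a value of `Z`.
-/

open scoped Classical

theorem List.exists_eq_cons_append_singleton {α : Type*} {l : List α} {n : ℕ}
    (h : l.length = n + 2) : ∃ a w b, w.length = n ∧ l = a :: (w ++ [b]) := by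
  obtain _ | ⟨a, t⟩ := l
  · simp at h
  obtain rfl | ⟨w, b, rfl⟩ := t.eq_nil_or_concat'
  · simp at h
  exact ⟨a, w, b, by simpa using h, rfl⟩

theorem List.reverse_cons_append_singleton_eq_self_iff {α : Type*} {a b : α} {w : List α} :
    (a :: (w ++ [b])).reverse = a :: (w ++ [b]) ↔ a = b ∧ w.reverse = w := by
  rw [reverse_cons, reverse_append]
  simp only [reverse_singleton, cons_append, cons.injEq, append_singleton_inj]
  grind

theorem mem_allBool {l : List Bool} {n : ℕ} : l ∈ allBool n ↔ l.length = n := by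
  constructor
  · intro h
    obtain ⟨f, -, rfl⟩ := Finset.mem_image.mp h
    exact List.length_ofFn
  · rintro rfl
    exact Finset.mem_image.mpr ⟨l.get, Finset.mem_univ _, List.ofFn_get l⟩

theorem mem_fibStrings {l : List Bool} {n : ℕ} :
    l ∈ fibStrings n ↔ l.length = n ∧ IsFibStr l := by
  simp [fibStrings, mem_allBool]

theorem isFibStr_iff_isChain {l : List Bool} :
    IsFibStr l ↔ l.IsChain fun a b => a = false ∨ b = false :=
  Iff.rfl

theorem isFibStr_false_cons_append_false {w : List Bool} :
    IsFibStr (false :: (w ++ [false])) ↔ IsFibStr w := by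
  simp [isFibStr_iff_isChain, List.isChain_cons, List.isChain_append]

theorem isFibStr_true_cons_append_true {w : List Bool} :
    IsFibStr (true :: (w ++ [true])) ↔
      IsFibStr w ∧ w.head? = some false ∧ w.getLast? = some false := by
  rcases w.eq_nil_or_concat' with rfl | ⟨v, b, rfl⟩
  · simp [isFibStr_iff_isChain]
  · simp [isFibStr_iff_isChain, List.isChain_cons, List.isChain_append]
    grind

noncomputable def fibPalindromes (n : ℕ) : Finset (List Bool) :=
  (fibStrings n).filter fun l => l.reverse = l

noncomputable def fibPalindromesStartingWith (n : ℕ) (a : Bool) : Finset (List Bool) :=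
  (fibStrings n).filter fun l => l.reverse = l ∧ l.head? = some a

theorem mem_fibPalindromes {l : List Bool} {n : ℕ} :
    l ∈ fibPalindromes n ↔ l.length = n ∧ IsFibStr l ∧ l.reverse = l := by
  simp [fibPalindromes, mem_fibStrings, and_assoc]

theorem mem_fibPalindromesStartingWith {l : List Bool} {n : ℕ} {a : Bool} :
    l ∈ fibPalindromesStartingWith n a ↔
      l.length = n ∧ IsFibStr l ∧ l.reverse = l ∧ l.head? = some a := by
  simp [fibPalindromesStartingWith, mem_fibStrings, and_assoc]

theorem fibPalindromes_zero : fibPalindromes 0 = {[]} := by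
  ext l
  simp only [mem_fibPalindromes, List.length_eq_zero_iff, Finset.mem_singleton]
  constructor
  · exact fun h => h.1
  · rintro rfl
    exact ⟨rfl, List.isChain_nil, rfl⟩

theorem fibPalindromesStartingWith_zero (a : Bool) : fibPalindromesStartingWith 0 a = ∅ := by
  ext l
  simp only [mem_fibPalindromesStartingWith, List.length_eq_zero_iff, Finset.notMem_empty,
    iff_false]
  rintro ⟨rfl, -, -, ⟨⟩⟩

theorem fibPalindromesStartingWith_one (a : Bool) : fibPalindromesStartingWith 1 a = {[a]} := by
  ext l
  rw [mem_fibPalindromesStartingWith, Finset.mem_singleton]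
  constructor
  · rintro ⟨hlen, -, -, hhead⟩
    obtain ⟨b, rfl⟩ := List.length_eq_one_iff.mp hlen
    cases hhead
    rfl
  · rintro rfl
    exact ⟨rfl, List.isChain_singleton a, rfl, rfl⟩

theorem fibPalindromesStartingWith_false_add_two (n : ℕ) :
    fibPalindromesStartingWith (n + 2) false =
      (fibPalindromes n).image fun w => false :: (w ++ [false]) := by
  ext l
  simp only [mem_fibPalindromesStartingWith, Finset.mem_image, mem_fibPalindromes]
  constructor
  · rintro ⟨hlen, hfib, hpal, hhead⟩
    obtain ⟨a, w, b, hw, rfl⟩ := List.exists_eq_cons_append_singleton hlen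
    obtain ⟨rfl, hw_pal⟩ := List.reverse_cons_append_singleton_eq_self_iff.mp hpal
    cases hhead
    exact ⟨w, ⟨hw, isFibStr_false_cons_append_false.mp hfib, hw_pal⟩, rfl⟩
  · rintro ⟨w, ⟨hw, hfib, hpal⟩, rfl⟩
    exact ⟨by simp [hw], isFibStr_false_cons_append_false.mpr hfib,
      List.reverse_cons_append_singleton_eq_self_iff.mpr ⟨rfl, hpal⟩, rfl⟩

theorem fibPalindromesStartingWith_true_add_two (n : ℕ) :
    fibPalindromesStartingWith (n + 2) true =
      (fibPalindromesStartingWith n false).image fun w => true :: (w ++ [true]) := by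
  ext l
  simp only [mem_fibPalindromesStartingWith, Finset.mem_image]
  constructor
  · rintro ⟨hlen, hfib, hpal, hhead⟩
    obtain ⟨a, w, b, hw, rfl⟩ := List.exists_eq_cons_append_singleton hlen
    obtain ⟨rfl, hw_pal⟩ := List.reverse_cons_append_singleton_eq_self_iff.mp hpal
    cases hhead
    obtain ⟨hw_fib, hw_head, -⟩ := isFibStr_true_cons_append_true.mp hfib
    exact ⟨w, ⟨hw, hw_fib, hw_pal, hw_head⟩, rfl⟩
  · rintro ⟨w, ⟨hw, hfib, hpal, hhead⟩, rfl⟩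
    have hlast : w.getLast? = some false := by rw [← hpal, List.getLast?_reverse, hhead]
    exact ⟨by simp [hw], isFibStr_true_cons_append_true.mpr ⟨hfib, hhead, hlast⟩,
      List.reverse_cons_append_singleton_eq_self_iff.mpr ⟨rfl, hpal⟩, rfl⟩

theorem fibPalindromes_succ (n : ℕ) :
    fibPalindromes (n + 1) =
      fibPalindromesStartingWith (n + 1) false ∪ fibPalindromesStartingWith (n + 1) true := by
  ext l
  simp only [Finset.mem_union, mem_fibPalindromes, mem_fibPalindromesStartingWith]
  constructor
  · rintro ⟨hlen, hfib, hpal⟩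
    obtain ⟨a, w, rfl⟩ := List.exists_cons_of_length_eq_add_one hlen
    cases a <;> simp_all
  · rintro (⟨hlen, hfib, hpal, -⟩ | ⟨hlen, hfib, hpal, -⟩) <;> exact ⟨hlen, hfib, hpal⟩

theorem card_fibPalindromesStartingWith_false_add_two (n : ℕ) :
    (fibPalindromesStartingWith (n + 2) false).card = (fibPalindromes n).card := by
  rw [fibPalindromesStartingWith_false_add_two]
  exact Finset.card_image_of_injective _ (List.cons_injective.comp (List.append_left_injective _))

theorem card_fibPalindromesStartingWith_true_add_two (n : ℕ) :
    (fibPalindromesStartingWith (n + 2) true).card =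
      (fibPalindromesStartingWith n false).card := by
  rw [fibPalindromesStartingWith_true_add_two]
  exact Finset.card_image_of_injective _ (List.cons_injective.comp (List.append_left_injective _))

theorem card_fibPalindromes_succ (n : ℕ) :
    (fibPalindromes (n + 1)).card =
      (fibPalindromesStartingWith (n + 1) false).card +
        (fibPalindromesStartingWith (n + 1) true).card := by
  refine fibPalindromes_succ n ▸ Finset.card_union_of_disjoint (Finset.disjoint_left.mpr ?_)
  intro l h_false h_true
  have := (mem_fibPalindromesStartingWith.mp h_false).2.2.2.symm.trans
    (mem_fibPalindromesStartingWith.mp h_true).2.2.2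
  simp at this

theorem card_fibPalindromesStartingWith_false_add_four (n : ℕ) :
    (fibPalindromesStartingWith (n + 4) false).card =
      (fibPalindromesStartingWith (n + 2) false).card +
        (fibPalindromesStartingWith n false).card := by
  rw [card_fibPalindromesStartingWith_false_add_two, card_fibPalindromes_succ,
    card_fibPalindromesStartingWith_true_add_two]

theorem card_fibPalindromesStartingWith_false_two_mul :
    ∀ k, (fibPalindromesStartingWith (2 * k) false).card = Nat.fib k
  | 0 => by simp [fibPalindromesStartingWith_zero]
  | 1 => by
    rw [card_fibPalindromesStartingWith_false_add_two, fibPalindromes_zero]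
    rfl
  | k + 2 => by
    have h_prev : (fibPalindromesStartingWith (2 * k + 2) false).card = Nat.fib (k + 1) :=
      card_fibPalindromesStartingWith_false_two_mul (k + 1)
    show (fibPalindromesStartingWith (2 * k + 4) false).card = _
    rw [card_fibPalindromesStartingWith_false_add_four, h_prev,
      card_fibPalindromesStartingWith_false_two_mul k, Nat.fib_add_two, add_comm]

theorem card_fibPalindromesStartingWith_false_two_mul_add_one :
    ∀ k, (fibPalindromesStartingWith (2 * k + 1) false).card = Nat.fib (k + 2)
  | 0 => by simp [fibPalindromesStartingWith_one]
  | 1 => by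
    rw [card_fibPalindromesStartingWith_false_add_two, card_fibPalindromes_succ]
    simp only [Nat.zero_add, fibPalindromesStartingWith_one, Finset.card_singleton]
    rfl
  | k + 2 => by
    have h_prev : (fibPalindromesStartingWith (2 * k + 1 + 2) false).card = Nat.fib (k + 3) :=
      card_fibPalindromesStartingWith_false_two_mul_add_one (k + 1)
    show (fibPalindromesStartingWith (2 * k + 1 + 4) false).card = _
    rw [card_fibPalindromesStartingWith_false_add_four, h_prev,
      card_fibPalindromesStartingWith_false_two_mul_add_one k, Nat.fib_add_two (n := k + 2),
      add_comm]

theorem card_fibPalindromesStartingWith_true_two_mul (k : ℕ) :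
    (fibPalindromesStartingWith (2 * k) true).card = Nat.fib (k - 1) := by
  cases k with
  | zero => simp [fibPalindromesStartingWith_zero]
  | succ k =>
    rw [Nat.mul_succ, card_fibPalindromesStartingWith_true_add_two,
      card_fibPalindromesStartingWith_false_two_mul, Nat.add_sub_cancel]

theorem card_fibPalindromesStartingWith_true_two_mul_add_one (k : ℕ) :
    (fibPalindromesStartingWith (2 * k + 1) true).card = Nat.fib (k + 1) := by
  cases k with
  | zero => simp [fibPalindromesStartingWith_one]
  | succ k =>
    rw [Nat.mul_succ, add_right_comm, card_fibPalindromesStartingWith_true_add_two,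
      card_fibPalindromesStartingWith_false_two_mul_add_one]

theorem card_fibPalindromes_two_mul (k : ℕ) : (fibPalindromes (2 * k)).card = Nat.fib (k + 1) := by
  rw [← card_fibPalindromesStartingWith_false_add_two, ← Nat.mul_succ,
    card_fibPalindromesStartingWith_false_two_mul]

theorem card_fibPalindromes_two_mul_add_one (k : ℕ) :
    (fibPalindromes (2 * k + 1)).card = Nat.fib (k + 3) := by
  rw [← card_fibPalindromesStartingWith_false_add_two, add_right_comm, ← Nat.mul_succ,
    card_fibPalindromesStartingWith_false_two_mul_add_one]

theorem count_fib_palindromes_general (k : ℕ) :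
    ((fibStrings (2 * k)).filter fun l => l.reverse = l).card = Nat.fib (k + 1) ∧
    ((fibStrings (2 * k + 1)).filter fun l => l.reverse = l).card = Nat.fib (k + 3) ∧
    ((fibStrings (2 * k)).filter fun l => l.reverse = l ∧ l.head? = some false).card
      = Nat.fib k ∧
    ((fibStrings (2 * k)).filter fun l => l.reverse = l ∧ l.head? = some true).card
      = Nat.fib (k - 1) ∧
    ((fibStrings (2 * k + 1)).filter fun l => l.reverse = l ∧ l.head? = some false).card
      = Nat.fib (k + 2) ∧
    ((fibStrings (2 * k + 1)).filter fun l => l.reverse = l ∧ l.head? = some true).card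
      = Nat.fib (k + 1) :=
  ⟨card_fibPalindromes_two_mul k, card_fibPalindromes_two_mul_add_one k,
    card_fibPalindromesStartingWith_false_two_mul k,
    card_fibPalindromesStartingWith_true_two_mul k,
    card_fibPalindromesStartingWith_false_two_mul_add_one k,
    card_fibPalindromesStartingWith_true_two_mul_add_one k⟩

/-- Counts of palindromic Fibonacci strings: for `k ≥ 1` there are `F_{k+1}` of length `2k`
and `F_{k+3}` of length `2k+1`; among those of length `2k`, `F_k` begin with 0 and `F_{k−1}`
begin with 1; among those of length `2k+1`, `F_{k+2}` begin with 0 and `F_{k+1}` begin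
with 1. -/
theorem count_fib_palindromes (k : ℕ) (hk : 1 ≤ k) :
    ((fibStrings (2 * k)).filter fun l => l.reverse = l).card = Nat.fib (k + 1) ∧
    ((fibStrings (2 * k + 1)).filter fun l => l.reverse = l).card = Nat.fib (k + 3) ∧
    ((fibStrings (2 * k)).filter fun l => l.reverse = l ∧ l.head? = some false).card
      = Nat.fib k ∧
    ((fibStrings (2 * k)).filter fun l => l.reverse = l ∧ l.head? = some true).card
      = Nat.fib (k - 1) ∧
    ((fibStrings (2 * k + 1)).filter fun l => l.reverse = l ∧ l.head? = some false).card
      = Nat.fib (k + 2) ∧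
    ((fibStrings (2 * k + 1)).filter fun l => l.reverse = l ∧ l.head? = some true).card
      = Nat.fib (k + 1) :=
  count_fib_palindromes_general k
end

section
/- For every integer n ≥ 1, there exists an asymmetric Lucas string of length n if and only if n ≥ 9. -/
open scoped Classical

/-!
A string of length `n` is read as a function on `ZMod n`: then `cyc` is the translation
`y ↦ y - 1` and reversal is `y ↦ -1 - y`, so the dihedral orbit has `2n` elements as soon as
the function has trivial stabiliser in the dihedral group of `ZMod n`. For `n ≥ 9` the Lucas
string with 1s exactly at positions `0, 3, 5` has this property: a symmetry moves `0` onto one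
of the marks, and every choice except the identity sends `3` or `5` off the marks, because all
the differences involved are smaller than `n` in absolute value. For `1 ≤ n ≤ 8` an exhaustive
search shows that no Lucas string is asymmetric.
-/

lemma ZMod.natCast_injOn_range {n : ℕ} : Set.InjOn (Nat.cast : ℕ → ZMod n) (Finset.range n) := by
  intro i hi j hj h
  simp only [Finset.coe_range, Set.mem_Iio] at hi hj
  rwa [ZMod.natCast_eq_natCast_iff', Nat.mod_eq_of_lt hi, Nat.mod_eq_of_lt hj] at h

lemma ZMod.intCast_eq_intCast_iff_of_abs_sub_lt {n : ℕ} {a b : ℤ} (h : |b - a| < n) :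
    (a : ZMod n) = b ↔ a = b := by
  rw [ZMod.intCast_eq_intCast_iff_dvd_sub]
  refine ⟨fun hdvd => ?_, fun hab => by simp [hab]⟩
  linarith [Int.eq_zero_of_abs_lt_dvd hdvd h]

def ofZMod {α : Type*} (n : ℕ) (f : ZMod n → α) : List α := List.ofFn fun i : Fin n => f i

section ofZMod

variable {α : Type*} {n : ℕ}

@[simp]
lemma length_ofZMod (f : ZMod n → α) : (ofZMod n f).length = n := List.length_ofFn

lemma getElem_ofZMod (f : ZMod n → α) (k : ℕ) (hk : k < (ofZMod n f).length) :
    (ofZMod n f)[k] = f k := List.getElem_ofFn ..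

lemma cyc_ofZMod (f : ZMod n → α) : cyc (ofZMod n f) = ofZMod n fun y => f (y - 1) := by
  refine List.ext_getElem (by simp [cyc]) fun k hk _ => ?_
  have hk : k < n := by simpa [cyc] using hk
  simp only [cyc, List.getElem_rotate, getElem_ofZMod, length_ofZMod]
  congr 1
  rw [ZMod.natCast_mod, Nat.cast_add, Nat.cast_sub (by omega), ZMod.natCast_self]
  ring

lemma iterate_cyc_ofZMod (f : ZMod n → α) (j : ℕ) :
    cyc^[j] (ofZMod n f) = ofZMod n fun y => f (y - j) := by
  induction j with
  | zero => simp
  | succ j ih =>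
    rw [Function.iterate_succ_apply', ih, cyc_ofZMod]
    congr 1 with y
    push_cast
    ring_nf

lemma reverse_ofZMod (f : ZMod n → α) : (ofZMod n f).reverse = ofZMod n fun y => f (-1 - y) := by
  refine List.ext_getElem (by simp) fun k hk _ => ?_
  have hk : k < n := by simpa using hk
  simp only [List.getElem_reverse, getElem_ofZMod, length_ofZMod]
  congr 1
  rw [Nat.cast_sub (by omega), Nat.cast_sub (by omega), ZMod.natCast_self]
  ring

lemma ofZMod_injective [NeZero n] : Function.Injective (ofZMod (α := α) n) := by
  intro f g h
  funext y
  have := congrArg (fun l => l[y.val]?) h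
  simpa [getElem_ofZMod, ZMod.val_lt] using this

lemma head?_ofZMod [NeZero n] (f : ZMod n → α) :
    (ofZMod n f).head? = some (f 0) := by
  rw [List.head?_eq_getElem?, List.getElem?_eq_getElem (by simp [NeZero.pos]), getElem_ofZMod,
    Nat.cast_zero]

end ofZMod

lemma card_dihedralOrbit_ofZMod {α : Type*} [DecidableEq α] {n : ℕ} [NeZero n]
    (f : ZMod n → α) (hrot : ∀ t, (∀ y, f (y + t) = f y) → t = 0)
    (hrefl : ∀ c, ¬∀ y, f (c - y) = f y) : (dihedralOrbit (ofZMod n f)).card = 2 * n := by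
  have hcast {i j : ℕ} (hi : i ∈ Finset.range n) (hj : j ∈ Finset.range n)
      (h : (i : ZMod n) - j = 0) : i = j :=
    ZMod.natCast_injOn_range hi hj (sub_eq_zero.mp h)
  simp only [dihedralOrbit, length_ofZMod, reverse_ofZMod, iterate_cyc_ofZMod]
  rw [Finset.card_union_of_disjoint, Finset.card_image_of_injOn, Finset.card_image_of_injOn,
    Finset.card_range, two_mul]
  · intro i hi j hj h
    have H := congrFun (ofZMod_injective h)
    exact hcast hi hj <| hrot _ fun z => by convert H (-1 - z + j) using 2 <;> ring
  · intro i hi j hj h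
    have H := congrFun (ofZMod_injective h)
    exact hcast hi hj <| hrot _ fun z => by convert (H (z + i)).symm using 2 <;> ring
  · refine Finset.disjoint_left.mpr fun l hl hl' => ?_
    obtain ⟨i, -, rfl⟩ := Finset.mem_image.mp hl
    obtain ⟨j, -, h⟩ := Finset.mem_image.mp hl'
    have H := congrFun (ofZMod_injective h)
    exact hrefl (j - i - 1) fun z => by convert H (z + i) using 2 <;> ring

lemma mem_lucasStrings {n : ℕ} {u : List Bool} :
    u ∈ lucasStrings n ↔ u.length = n ∧ IsLucasStr u := by
  refine Finset.mem_filter.trans (and_congr_left' ⟨?_, ?_⟩)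
  · rintro h
    obtain ⟨f, -, rfl⟩ := Finset.mem_image.mp h
    exact List.length_ofFn
  · rintro rfl
    exact Finset.mem_image.mpr ⟨fun i => u[i], Finset.mem_univ _, List.ofFn_getElem⟩

def lucasWitnessSupport (n : ℕ) : Finset (ZMod n) := ({0, 3, 5} : Finset ℤ).image (↑)

def lucasWitness (n : ℕ) : List Bool := ofZMod n fun y => decide (y ∈ lucasWitnessSupport n)

section lucasWitness

variable {n : ℕ}

lemma intCast_mem_lucasWitnessSupport_iff (hn : 9 ≤ n) {x : ℤ} (hx : -4 < x) (hxn : x < n) :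
    (x : ZMod n) ∈ lucasWitnessSupport n ↔ x ∈ ({0, 3, 5} : Finset ℤ) := by
  simp only [lucasWitnessSupport, Finset.mem_image]
  refine ⟨fun ⟨b, hb, hbx⟩ => ?_, fun hx => ⟨x, hx, rfl⟩⟩
  have hb' : 0 ≤ b ∧ b ≤ 5 := by simp only [Finset.mem_insert, Finset.mem_singleton] at hb; omega
  rwa [(ZMod.intCast_eq_intCast_iff_of_abs_sub_lt (abs_lt.mpr ⟨by omega, by omega⟩)).mp hbx] at hb

lemma zero_mem_lucasWitnessSupport : (0 : ZMod n) ∈ lucasWitnessSupport n :=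
  Finset.mem_image.mpr ⟨0, by simp, Int.cast_zero⟩

lemma eq_zero_of_forall_add_mem_lucasWitnessSupport_iff (hn : 9 ≤ n) (t : ZMod n)
    (h : ∀ y, y + t ∈ lucasWitnessSupport n ↔ y ∈ lucasWitnessSupport n) : t = 0 := by
  have mem := @intCast_mem_lucasWitnessSupport_iff n hn
  have h0 := (h 0).mpr zero_mem_lucasWitnessSupport
  rw [zero_add] at h0
  obtain ⟨a, ha, rfl⟩ := Finset.mem_image.mp h0
  simp only [Finset.mem_insert, Finset.mem_singleton] at ha
  have h3 := (h ((3 : ℤ) : ZMod n)).mpr ((mem (by omega) (by omega)).mpr (by simp))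
  rw [← Int.cast_add, mem (by omega) (by omega)] at h3
  simp only [Finset.mem_insert, Finset.mem_singleton] at h3
  obtain rfl : a = 0 := by omega
  exact Int.cast_zero

lemma not_forall_sub_mem_lucasWitnessSupport_iff (hn : 9 ≤ n) (c : ZMod n) :
    ¬∀ y, c - y ∈ lucasWitnessSupport n ↔ y ∈ lucasWitnessSupport n := by
  intro h
  have mem := @intCast_mem_lucasWitnessSupport_iff n hn
  have h0 := (h 0).mpr zero_mem_lucasWitnessSupport
  rw [sub_zero] at h0
  obtain ⟨a, ha, rfl⟩ := Finset.mem_image.mp h0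
  simp only [Finset.mem_insert, Finset.mem_singleton] at ha
  have h3 := (h ((3 : ℤ) : ZMod n)).mpr ((mem (by omega) (by omega)).mpr (by simp))
  rw [← Int.cast_sub, mem (by omega) (by omega)] at h3
  simp only [Finset.mem_insert, Finset.mem_singleton] at h3
  obtain rfl : a = 3 := by omega
  have h5 := (h ((5 : ℤ) : ZMod n)).mpr ((mem (by omega) (by omega)).mpr (by simp))
  rw [← Int.cast_sub, mem (by omega) (by omega)] at h5
  simp at h5

lemma lucasWitness_mem_lucasStrings (hn : 9 ≤ n) : lucasWitness n ∈ lucasStrings n := by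
  have : NeZero n := ⟨by omega⟩
  have mem := @intCast_mem_lucasWitnessSupport_iff n hn
  refine mem_lucasStrings.mpr ⟨length_ofZMod _, ?_, ?_⟩
  · refine List.isChain_ofFn.mpr fun i hi => ?_
    simp only [decide_eq_false_iff_not, ← Int.cast_natCast (R := ZMod n)]
    rw [mem (by omega) (by omega), mem (by omega) (by omega)]
    simp only [Finset.mem_insert, Finset.mem_singleton]
    omega
  · rintro ⟨-, hlast⟩
    rw [lucasWitness, ← List.head?_reverse, reverse_ofZMod, head?_ofZMod, sub_zero] at hlast
    have hmem := of_decide_eq_true (Option.some.inj hlast)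
    rw [← Int.cast_one, ← Int.cast_neg, mem (by omega) (by omega)] at hmem
    simp at hmem

lemma card_dihedralOrbit_lucasWitness (hn : 9 ≤ n) :
    (dihedralOrbit (lucasWitness n)).card = 2 * n := by
  have : NeZero n := ⟨by omega⟩
  refine card_dihedralOrbit_ofZMod _ (fun t ht => ?_) fun c hc => ?_
  · exact eq_zero_of_forall_add_mem_lucasWitnessSupport_iff hn t fun y => by simpa using ht y
  · exact not_forall_sub_mem_lucasWitnessSupport_iff hn c fun y => by simpa using hc y

end lucasWitness

-- `open scoped Classical` would otherwise supply instances that `decide` cannot evaluate.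
instance : DecidablePred IsFibStr := fun l =>
  inferInstanceAs (Decidable (l.IsChain fun a b => a = false ∨ b = false))

instance : DecidablePred IsLucasStr := fun l =>
  inferInstanceAs (Decidable (IsFibStr l ∧ ¬(l.head? = some true ∧ l.getLast? = some true)))

lemma mem_sections_replicate_length (u : List Bool) :
    u ∈ (List.replicate u.length [false, true]).sections := by
  rw [List.mem_sections]
  induction u with
  | nil => exact List.Forall₂.nil
  | cons a u ih => exact List.Forall₂.cons (by cases a <;> simp) ih

set_option maxRecDepth 2000 in
lemma card_dihedralOrbit_ne_of_isLucasStr {u : List Bool} (hu : IsLucasStr u)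
    (hpos : 1 ≤ u.length) (hle : u.length ≤ 8) : (dihedralOrbit u).card ≠ 2 * u.length := by
  have hcheck : ∀ n ≤ 8, 1 ≤ n → ∀ v ∈ (List.replicate n [false, true]).sections,
      IsLucasStr v → (dihedralOrbit v).card ≠ 2 * n := by
    decide
  exact hcheck _ hle hpos u (mem_sections_replicate_length u) hu

/-- For `n ≥ 1`, there exists an asymmetric Lucas string of length `n` iff `n ≥ 9`. -/
theorem exists_asymmetric_lucas_iff (n : ℕ) (hn : 1 ≤ n) :
    (∃ u ∈ lucasStrings n, (dihedralOrbit u).card = 2 * n) ↔ 9 ≤ n := by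
  refine ⟨fun ⟨u, hu, hcard⟩ => ?_, fun h9 =>
    ⟨lucasWitness n, lucasWitness_mem_lucasStrings h9, card_dihedralOrbit_lucasWitness h9⟩⟩
  obtain ⟨rfl, hlucas⟩ := mem_lucasStrings.mp hu
  by_contra hlt
  exact card_dihedralOrbit_ne_of_isLucasStr hlucas hn (by omega) hcard
end

section
/- Let u be a string of length n over an alphabet and let j be an integer with 0 ≤ j < n. Then α^j(β(u)) = u if and only if there exist strings x of length j and y of length n−j such that x equals its reversal, y equals its reversal, and u is the concatenation xy. -/
open scoped Classical

lemma cyc_iterate {α : Type*} (u : List α) (j : ℕ) :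
    cyc^[j] u = u.rotate (j * (u.length - 1)) := by
  induction j with
  | zero => simp
  | succ k ih =>
      rw [Function.iterate_succ_apply', ih, cyc, List.length_rotate,
        List.rotate_rotate, Nat.succ_mul]

lemma key_rotate {α : Type*} (u : List α) (n j : ℕ) (hlen : u.length = n)
    (hj : j < n) :
    cyc^[j] u.reverse = (u.take j).reverse ++ (u.drop j).reverse := by
  have hn : (0:ℕ) < n := lt_of_le_of_lt (Nat.zero_le _) hj
  have hlr : u.reverse.length = n := by simp [hlen]
  rw [cyc_iterate, hlr]
  have e1 : j * (n - 1) + j = j * n := by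
    cases n with
    | zero => omega
    | succ m => simp [Nat.mul_succ]
  have hmod : (j * (n - 1)) % n = (n - j) % n := by
    have h2 : (j * (n - 1) + j) % n = ((n - j) + j) % n := by
      rw [e1, Nat.sub_add_cancel hj.le]
      simp [Nat.mul_mod_left]
    exact Nat.ModEq.add_right_cancel' j h2
  have h1 : u.reverse.rotate (j * (n - 1)) = u.reverse.rotate (n - j) := by
    conv_lhs => rw [← List.rotate_mod]
    conv_rhs => rw [← List.rotate_mod]
    rw [hlr, hmod]
  rw [h1, List.rotate_eq_drop_append_take (show n - j ≤ u.reverse.length by rw [hlr]; omega)]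
  have hjj : n - (n - j) = j := by omega
  rw [List.drop_reverse, List.take_reverse, hlen, hjj]


/-- For `0 ≤ j < n`, `α^j(β(u)) = u` iff `u = xy` where `x` is a palindrome of length `j`
and `y` is a palindrome of length `n − j`. -/
theorem fixed_iff_two_palindromes {α : Type*}
    (n : ℕ) (u : List α) (hlen : u.length = n) (j : ℕ) (hj : j < n) :
    cyc^[j] u.reverse = u ↔
      ∃ x y : List α, x.length = j ∧ y.length = n - j ∧
        x.reverse = x ∧ y.reverse = y ∧ u = x ++ y := by
  rw [key_rotate u n j hlen hj]
  constructor
  · intro h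
    refine ⟨u.take j, u.drop j, ?_, ?_, ?_, ?_, (List.take_append_drop j u).symm⟩
    · simp [hlen]; omega
    · simp [hlen]
    · have := h.trans (List.take_append_drop j u).symm
      exact (List.append_inj this (by simp)).1
    · have := h.trans (List.take_append_drop j u).symm
      exact (List.append_inj this (by simp)).2
  · rintro ⟨x, y, hx, hy, hxr, hyr, rfl⟩
    rw [List.take_left' hx, List.drop_left' hx, hxr, hyr]
end
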